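/- Let ỹ = ((α+x) mod 2^n) XOR ((β+x) mod 2^n) XOR α XOR β with α, β, x independent uniform n-bit integers. Then the probability that the i-th bit of ỹ equals 0 satisfies q_0 = 1, q_i = (3/4)q_{i−1} + (1/2)(1 − q_{i−1}), with closed form q_i = 2/3 + 1/(3·4^i). -/

import Mathlib

/-!
Bit `i` of `(a + x) mod 2^n` is `aᵢ ⊕ xᵢ ⊕ cᵢ(a, x)`, where `cᵢ(a, x)` is the carry into bit `i`,
i.e. `2^i ≤ a mod 2^i + x mod 2^i`. Hence bit `i` of `ỹ` is `cᵢ(α, x) ⊕ cᵢ(β, x)`. For fixed `x`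
with `r = x mod 2^i`, exactly a fraction `r / 2^i` of all `α` produce a carry, and `α`, `β` are
independent, so `qᵢ` is the average over `r < 2^i` of `(r² + (2^i - r)²) / 4^i`, which is
`2/3 + 1/(3·4^i)`. The recursion is read off the closed form.
-/

open Finset

def carry (i a b : ℕ) : Bool := decide (2 ^ i ≤ a % 2 ^ i + b % 2 ^ i)

theorem testBit_add_eq_xor_carry (a b i : ℕ) :
    (a + b).testBit i = (a.testBit i ^^ (b.testBit i ^^ carry i a b)) := by
  have h :=
    BitVec.getLsbD_add (Nat.lt_succ_self i) (BitVec.ofNat (i + 1) a) (BitVec.ofNat (i + 1) b)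
  have hdvd : 2 ^ i ∣ 2 ^ (i + 1) := pow_dvd_pow 2 (Nat.le_succ i)
  simpa only [← BitVec.ofNat_add, BitVec.getLsbD_ofNat, BitVec.carry, BitVec.toNat_ofNat,
    Nat.mod_mod_of_dvd _ hdvd, Nat.lt_succ_self, decide_true, Bool.true_and, Bool.toNat_false,
    add_zero, ge_iff_le, carry] using h

theorem carry_mod_two_pow (i a b : ℕ) : carry i (a % 2 ^ i) b = carry i a b := by
  simp only [carry, Nat.mod_mod]

theorem testBit_xor_mod_add_eq_false_iff {n i : ℕ} (hi : i < n) (a b x : ℕ) :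
    ((((a + x) % 2 ^ n) ^^^ ((b + x) % 2 ^ n)) ^^^ a ^^^ b).testBit i = false ↔
      carry i a x = carry i b x := by
  simp only [Nat.testBit_xor, Nat.testBit_mod_two_pow, hi, decide_true, Bool.true_and,
    testBit_add_eq_xor_carry]
  cases a.testBit i <;> cases b.testBit i <;> cases x.testBit i <;> cases carry i a x <;>
    cases carry i b x <;> decide

theorem sum_range_mul_mod {M : Type*} [AddCommMonoid M] (f : ℕ → M) (m k : ℕ) :
    ∑ x ∈ range (m * k), f (x % k) = m • ∑ r ∈ range k, f r := by
  induction m with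
  | zero => simp
  | succ m ih =>
    rw [add_mul, one_mul, sum_range_add, ih, succ_nsmul]
    congr 1
    refine sum_congr rfl fun r hr => ?_
    rw [Nat.mul_add_mod_self_right, Nat.mod_eq_of_lt (mem_range.1 hr)]

theorem card_filter_range_carry (i x : ℕ) : #{a ∈ range (2 ^ i) | carry i a x} = x % 2 ^ i := by
  have hx : x % 2 ^ i < 2 ^ i := Nat.mod_lt _ (Nat.two_pow_pos i)
  have h : {a ∈ range (2 ^ i) | carry i a x} = Ico (2 ^ i - x % 2 ^ i) (2 ^ i) := by
    ext a
    simp only [mem_filter, mem_range, mem_Ico, carry, decide_eq_true_eq]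
    constructor
    · rintro ⟨ha, hc⟩
      rw [Nat.mod_eq_of_lt ha] at hc
      omega
    · rintro ⟨hc, ha⟩
      rw [Nat.mod_eq_of_lt ha]
      omega
  rw [h, Nat.card_Ico]
  omega

theorem card_filter_carry {n i : ℕ} (hi : i ≤ n) (x : ℕ) :
    #{a ∈ range (2 ^ n) | carry i a x} = 2 ^ (n - i) * (x % 2 ^ i) := by
  rw [← Nat.pow_sub_mul_pow 2 hi, ← card_filter_range_carry, card_filter, card_filter]
  calc _ = ∑ a ∈ range (2 ^ (n - i) * 2 ^ i), if carry i (a % 2 ^ i) x then 1 else 0 := by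
        simp only [carry_mod_two_pow]
    _ = _ := sum_range_mul_mod (fun r => if carry i r x then 1 else 0) _ _

theorem card_filter_not_carry {n i : ℕ} (hi : i ≤ n) (x : ℕ) :
    #{a ∈ range (2 ^ n) | !carry i a x} = 2 ^ (n - i) * (2 ^ i - x % 2 ^ i) := by
  have h := card_filter_add_card_filter_not (s := range (2 ^ n)) (p := fun a => carry i a x)
  simp only [card_filter_carry hi, card_range, Bool.not_eq_true] at h
  simp only [Bool.not_eq_eq_eq_not, Bool.not_true]
  rw [Nat.mul_sub, ← pow_add, Nat.sub_add_cancel hi]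
  omega

theorem card_filter_product_eq {α : Type*} [DecidableEq α] (s : Finset α) (g : α → Bool) :
    #{p ∈ s ×ˢ s | g p.1 = g p.2} = #{a ∈ s | g a} ^ 2 + #{a ∈ s | !g a} ^ 2 := by
  have h : {p ∈ s ×ˢ s | g p.1 = g p.2} =
      {a ∈ s | g a} ×ˢ {a ∈ s | g a} ∪ {a ∈ s | !g a} ×ˢ {a ∈ s | !g a} := by
    ext ⟨a, b⟩
    simp only [mem_filter, mem_product, mem_union]
    cases g a <;> cases g b <;> simp
  rw [h, card_union_of_disjoint, card_product, card_product, sq, sq]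
  refine disjoint_left.2 fun p h₁ h₂ => ?_
  simp only [mem_product, mem_filter] at h₁ h₂
  simp [h₁.1.2] at h₂

theorem card_filter_product_product_eq {α β : Type*} [DecidableEq α] (s : Finset α)
    (u : Finset β) (f : α → β → Bool) :
    #{t ∈ s ×ˢ s ×ˢ u | f t.1 t.2.2 = f t.2.1 t.2.2} =
      ∑ x ∈ u, (#{a ∈ s | f a x} ^ 2 + #{a ∈ s | !f a x} ^ 2) := by
  calc _ = ∑ a ∈ s, ∑ x ∈ u, ∑ b ∈ s, if f a x = f b x then 1 else 0 := by
        simp only [card_filter, sum_product]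
        exact sum_congr rfl fun a _ => sum_comm
    _ = ∑ x ∈ u, ∑ a ∈ s, ∑ b ∈ s, if f a x = f b x then 1 else 0 := sum_comm
    _ = _ := sum_congr rfl fun x _ => by
        rw [← card_filter_product_eq s (f · x), card_filter, sum_product]

theorem three_mul_sum_range_sq_add_succ_sq (k : ℕ) :
    3 * ∑ r ∈ range k, (r ^ 2 + (r + 1) ^ 2) = 2 * k ^ 3 + k := by
  induction k with
  | zero => simp
  | succ k ih => rw [sum_range_succ, mul_add, ih]; ring

theorem three_mul_sum_range_sq_add_sub_sq (k : ℕ) :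
    3 * ∑ r ∈ range k, (r ^ 2 + (k - r) ^ 2) = 2 * k ^ 3 + k := by
  have h : ∑ r ∈ range k, (k - r) ^ 2 = ∑ r ∈ range k, (r + 1) ^ 2 := by
    rw [← sum_range_reflect (fun r => (r + 1) ^ 2)]
    refine sum_congr rfl fun r hr => ?_
    have hrk := mem_range.1 hr
    congr 1
    omega
  rw [sum_add_distrib, h, ← sum_add_distrib, three_mul_sum_range_sq_add_succ_sq]

theorem three_mul_card_filter_testBit_eq_false {n i : ℕ} (hi : i < n) :
    3 * #{t ∈ range (2 ^ n) ×ˢ range (2 ^ n) ×ˢ range (2 ^ n) |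
      ((((t.1 + t.2.2) % 2 ^ n) ^^^ ((t.2.1 + t.2.2) % 2 ^ n)) ^^^ t.1 ^^^ t.2.1).testBit i
        = false} = 2 * (2 ^ n) ^ 3 + (2 ^ (n - i)) ^ 3 * 2 ^ i := by
  rw [filter_congr fun t _ => testBit_xor_mod_add_eq_false_iff hi t.1 t.2.1 t.2.2,
    card_filter_product_product_eq]
  simp only [card_filter_carry hi.le, card_filter_not_carry hi.le, mul_pow, ← mul_add]
  rw [← Nat.pow_sub_mul_pow 2 hi.le,
    sum_range_mul_mod (fun r => (2 ^ (n - i)) ^ 2 * (r ^ 2 + (2 ^ i - r) ^ 2)), smul_eq_mul,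
    ← mul_sum]
  calc _ = (2 ^ (n - i)) ^ 3 * (3 * ∑ r ∈ range (2 ^ i), (r ^ 2 + (2 ^ i - r) ^ 2)) := by ring
    _ = _ := by rw [three_mul_sum_range_sq_add_sub_sq]; ring

theorem card_filter_testBit_eq_false_div {n i : ℕ} (hi : i < n) :
    (#{t ∈ range (2 ^ n) ×ˢ range (2 ^ n) ×ˢ range (2 ^ n) |
      ((((t.1 + t.2.2) % 2 ^ n) ^^^ ((t.2.1 + t.2.2) % 2 ^ n)) ^^^ t.1 ^^^ t.2.1).testBit i
        = false} : ℚ) / (2 ^ n * 2 ^ n * 2 ^ n) = 2 / 3 + 1 / (3 * 4 ^ i) := by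
  have h := three_mul_card_filter_testBit_eq_false hi
  generalize Finset.card _ = c at h ⊢
  have hq : (3 * c : ℚ) = 2 * (2 ^ n) ^ 3 + (2 ^ (n - i)) ^ 3 * 2 ^ i := by exact_mod_cast h
  have h4 : (4 : ℚ) ^ i = (2 ^ i) ^ 2 := by rw [← pow_mul, mul_comm, pow_mul]; norm_num
  rw [← pow_sub_mul_pow (2 : ℚ) hi.le] at hq ⊢
  rw [h4, div_eq_iff (by positivity)]
  field_simp
  linear_combination hq

theorem stmt_15 (n : ℕ) (hn : 1 ≤ n) :
    ∀ q : ℕ → ℚ,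
      (∀ i, q i =
        (((((Finset.range (2^n)) ×ˢ (Finset.range (2^n)) ×ˢ (Finset.range (2^n))).filter
            (fun t =>
              (((((t.1 + t.2.2) % 2^n) ^^^ ((t.2.1 + t.2.2) % 2^n)) ^^^ t.1 ^^^ t.2.1).testBit i)
                = false)).card : ℚ) / ((2^n) * (2^n) * (2^n)))) →
      q 0 = 1 ∧
      (∀ i, i + 1 < n → q (i + 1) = 3/4 * q i + 1/2 * (1 - q i)) ∧
      (∀ i, i < n → q i = 2/3 + 1/(3 * 4^i)) := by
  intro q hq
  have closed (i : ℕ) (hi : i < n) : q i = 2 / 3 + 1 / (3 * 4 ^ i) :=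
    (hq i).trans (card_filter_testBit_eq_false_div hi)
  refine ⟨?_, fun i hi => ?_, closed⟩
  · rw [closed 0 hn]
    norm_num
  · rw [closed i (by omega), closed (i + 1) hi, pow_succ]
    field_simp
    ring
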